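/- Suppose 0 ≤ h < 1/n and d > 0. Let W be the n×n matrix with diagonal entries −(n−2+h)/((1−hn)d) and off-diagonal entries (1−h)/((1−hn)d), let δ be real, and let r ∈ ℝⁿ have r₁ = hd, r₂ = ρd − δ, and r_j = ρd for j ≥ 3. Then the first entry of rW is strictly less than its second entry if and only if δ > (1−hn)d/(n−1). (That is, for h < 1/n, the trained GCN layer without self-loops misclassifies the perturbed node exactly when the perturbation exceeds δ₂ = (1−hn)d/(n−1).) -/
import Mathlib


/-- Under heterophily `0 ≤ h < 1/n` (with `d > 0`), the trained GCN layer without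
self-loops misclassifies the perturbed node — i.e. the first entry of `rW` is strictly
less than its second entry — exactly when `δ > (1-hn)d/(n-1)`. -/
theorem h2gcn_gcn_noselfloop_misclassifies_iff
    (n : ℕ) (hn : 2 ≤ n) (d h : ℝ) (hd : 0 < d)
    (hh0 : 0 ≤ h) (hh : h < 1 / (n : ℝ))
    (ρ : ℝ) (hρ : ρ = (1 - h) / ((n : ℝ) - 1))
    (W : Matrix (Fin n) (Fin n) ℝ)
    (hW : ∀ i j, W i j =
      if i = j then -(((n : ℝ) - 2 + h)) / ((1 - h * (n : ℝ)) * d)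
      else (1 - h) / ((1 - h * (n : ℝ)) * d))
    (δ : ℝ) (r : Fin n → ℝ)
    (hr : ∀ j : Fin n, r j =
      if (j : ℕ) = 0 then h * d
      else if (j : ℕ) = 1 then ρ * d - δ
      else ρ * d) :
    Matrix.vecMul r W ⟨0, by omega⟩ < Matrix.vecMul r W ⟨1, by omega⟩ ↔
      δ > (1 - h * (n : ℝ)) * d / ((n : ℝ) - 1) := by
  have hn2 : (2:ℝ) ≤ (n:ℝ) := by exact_mod_cast hn
  have hn0 : (0:ℝ) < n := by linarith
  have hn1 : (0:ℝ) < (n:ℝ) - 1 := by linarith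
  have hhn : h * (n:ℝ) < 1 := by
    have := (lt_div_iff₀ hn0).mp hh; linarith
  have hA : (0:ℝ) < (1 - h * (n:ℝ)) * d := mul_pos (by linarith) hd
  set i0 : Fin n := ⟨0, by omega⟩
  set i1 : Fin n := ⟨1, by omega⟩
  have hne : i0 ≠ i1 := by simp [i0, i1, Fin.ext_iff]
  have key : Matrix.vecMul r W i1 - Matrix.vecMul r W i0
      = (h * d - (ρ * d - δ)) * (((n:ℝ) - 1) / ((1 - h * (n:ℝ)) * d)) := by
    simp only [Matrix.vecMul, dotProduct]
    rw [← Finset.sum_sub_distrib]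
    have hout : ∀ j ∈ Finset.univ, j ∉ ({i0, i1} : Finset (Fin n)) →
        r j * W j i1 - r j * W j i0 = 0 := by
      intro j _ hj
      simp only [Finset.mem_insert, Finset.mem_singleton, not_or] at hj
      rw [hW, hW, if_neg hj.1, if_neg hj.2, sub_self]
    rw [← Finset.sum_subset (Finset.subset_univ _) hout, Finset.sum_pair hne]
    simp only [hW, hr, i0, i1, Fin.mk.injEq]
    norm_num
    field_simp
    ring
  rw [show Matrix.vecMul r W i0 < Matrix.vecMul r W i1 ↔
      0 < Matrix.vecMul r W i1 - Matrix.vecMul r W i0 from (sub_pos).symm, key]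
  have hC : (0:ℝ) < ((n:ℝ) - 1) / ((1 - h * (n:ℝ)) * d) := div_pos hn1 hA
  rw [mul_pos_iff_of_pos_right hC]
  have heq : (1 - h * (n:ℝ)) * d / ((n:ℝ) - 1) = ρ * d - h * d := by
    rw [hρ]; field_simp; ring
  rw [gt_iff_lt, heq]
  constructor <;> intro <;> linarith
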